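/- arXiv:1903.08857 — 5 statements merged into one kernel-verified Lean document; each statement's English description precedes it below -/
import Mathlib

section
/- Let S ∈ ℝ^{n×m} satisfy ‖x^T(SSᵀ - I)x‖ ≤ ε‖x‖² for all x ∈ ℝ^n, with 0 < ε. Then for any A ∈ ℝ^{n×d} and every index i, the i-th eigenvalue of AᵀSSᵀA satisfies λ_i(AᵀA) - ε·λ_max(AᵀA) ≤ λ_i(AᵀSSᵀA) ≤ λ_i(AᵀA) + ε·λ_max(AᵀA). -/
/-!
Weyl's inequality by the Courant–Fischer argument: if the quadratic forms satisfy
`⟪S x, x⟫ ≤ ⟪T x, x⟫ + δ‖x‖²`, the span of the top `i + 1` eigenvectors of `S` and the span of the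
bottom `d - i` eigenvectors of `T` have dimensions adding up to `d + 1`, so they share a unit
vector `x`, and then `λᵢ(S) ≤ ⟪S x, x⟫ ≤ ⟪T x, x⟫ + δ ≤ λᵢ(T) + δ`. For `AᵀSSᵀA` and `AᵀA` the
quadratic forms differ by `(Ay)ᵀ(SSᵀ - I)(Ay)`, which is at most `ε‖Ay‖² ≤ ε λ_max(AᵀA) ‖y‖²`
in absolute value, so Weyl applies in both directions with `δ = ε λ_max(AᵀA)`.
-/

open Finset Module
open scoped InnerProductSpace

namespace Submodule

variable {K V : Type*} [DivisionRing K] [AddCommGroup V] [Module K V] [FiniteDimensional K V]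

theorem exists_mem_inf_ne_zero_of_finrank_lt {s t : Submodule K V}
    (h : finrank K V < finrank K s + finrank K t) : ∃ x ∈ s ⊓ t, x ≠ 0 :=
  (s ⊓ t).ne_bot_iff.1 fun hst =>
    (finrank_add_finrank_le_of_disjoint (disjoint_iff.2 hst)).not_gt h

end Submodule

namespace OrthonormalBasis

variable {ι E : Type*} [Fintype ι] [NormedAddCommGroup E] [InnerProductSpace ℝ E]
  (b : OrthonormalBasis ι ℝ E)

theorem finrank_span_image (s : Finset ι) :
    finrank ℝ (Submodule.span ℝ (b '' s)) = #s := by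
  classical
  rw [← coe_image, finrank_eq_card_basis (OrthonormalBasis.span b.orthonormal s).toBasis,
    Fintype.card_coe]

theorem inner_eq_zero_of_mem_span_image {s : Set ι} {x : E} (hx : x ∈ Submodule.span ℝ (b '' s))
    {k : ι} (hk : k ∉ s) : ⟪b k, x⟫_ℝ = 0 := by
  refine Submodule.mem_orthogonal_singleton_iff_inner_right.1 (Submodule.span_le.2 ?_ hx)
  rintro _ ⟨j, hj, rfl⟩
  exact Submodule.mem_orthogonal_singleton_iff_inner_right.2
    (b.orthonormal.2 fun hkj => hk (hkj ▸ hj))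

variable {T : E →ₗ[ℝ] E} {l : ι → ℝ}

theorem inner_map_self_eq_sum (hT : ∀ i, T (b i) = l i • b i) (x : E) :
    ⟪T x, x⟫_ℝ = ∑ i, l i * ⟪b i, x⟫_ℝ ^ 2 := by
  have hTx : T x = ∑ i, (l i * ⟪b i, x⟫_ℝ) • b i := by
    conv_lhs => rw [← b.sum_repr' x]
    simp only [map_sum, map_smul, hT, smul_smul, mul_comm]
  simp only [hTx, sum_inner, real_inner_smul_left, sq, mul_assoc]

theorem mul_norm_sq_le_inner_map_self (hT : ∀ i, T (b i) = l i • b i) {c : ℝ} {x : E}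
    (hc : ∀ i, ⟪b i, x⟫_ℝ ≠ 0 → c ≤ l i) : c * ‖x‖ ^ 2 ≤ ⟪T x, x⟫_ℝ := by
  rw [b.inner_map_self_eq_sum hT, ← b.sum_sq_inner_right, mul_sum]
  refine sum_le_sum fun i _ => ?_
  by_cases hi : ⟪b i, x⟫_ℝ = 0
  · simp [hi]
  · exact mul_le_mul_of_nonneg_right (hc i hi) (sq_nonneg _)

theorem inner_map_self_le_mul_norm_sq (hT : ∀ i, T (b i) = l i • b i) {c : ℝ} {x : E}
    (hc : ∀ i, ⟪b i, x⟫_ℝ ≠ 0 → l i ≤ c) : ⟪T x, x⟫_ℝ ≤ c * ‖x‖ ^ 2 := by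
  have h := b.mul_norm_sq_le_inner_map_self (T := -T) (l := -l) (c := -c)
    (fun i => by simp [hT, neg_smul]) fun i hi => neg_le_neg (hc i hi)
  simpa [neg_mul, inner_neg_left] using h

end OrthonormalBasis

theorem OrthonormalBasis.eigenvalue_le_add_of_inner_map_self_le {E : Type*}
    [NormedAddCommGroup E] [InnerProductSpace ℝ E] {d : ℕ} (b c : OrthonormalBasis (Fin d) ℝ E)
    {S T : E →ₗ[ℝ] E} {l m : Fin d → ℝ} (hl : Antitone l) (hm : Antitone m)
    (hS : ∀ i, S (b i) = l i • b i) (hT : ∀ i, T (c i) = m i • c i) {δ : ℝ}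
    (hST : ∀ x, ⟪S x, x⟫_ℝ ≤ ⟪T x, x⟫_ℝ + δ * ‖x‖ ^ 2) (i : Fin d) : l i ≤ m i + δ := by
  have : FiniteDimensional ℝ E := Module.Finite.of_basis b.toBasis
  obtain ⟨x, ⟨hxU, hxV⟩, hx⟩ := Submodule.exists_mem_inf_ne_zero_of_finrank_lt
    (s := Submodule.span ℝ (b '' (Iic i : Finset (Fin d))))
    (t := Submodule.span ℝ (c '' (Ici i : Finset (Fin d)))) <| by
      rw [b.finrank_span_image, c.finrank_span_image, Fin.card_Iic, Fin.card_Ici,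
        finrank_eq_card_basis b.toBasis, Fintype.card_fin]
      omega
  have hlow : l i * ‖x‖ ^ 2 ≤ ⟪S x, x⟫_ℝ := b.mul_norm_sq_le_inner_map_self hS fun k hk =>
    hl (by simpa using not_imp_comm.1 (b.inner_eq_zero_of_mem_span_image hxU) hk)
  have hup : ⟪T x, x⟫_ℝ ≤ m i * ‖x‖ ^ 2 := c.inner_map_self_le_mul_norm_sq hT fun k hk =>
    hm (by simpa using not_imp_comm.1 (c.inner_eq_zero_of_mem_span_image hxV) hk)
  have hx_pos : 0 < ‖x‖ ^ 2 := by positivity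
  nlinarith [hST x]

theorem EuclideanSpace.norm_toLp_sq_eq_dotProduct {n : Type*} [Fintype n] (y : n → ℝ) :
    ‖(WithLp.toLp 2 y : EuclideanSpace ℝ n)‖ ^ 2 = y ⬝ᵥ y := by
  rw [← real_inner_self_eq_norm_sq, EuclideanSpace.inner_toLp_toLp, star_trivial]

namespace Matrix

variable {n : Type*} [Fintype n]

theorem inner_toLpLin_self [DecidableEq n] (B : Matrix n n ℝ) (y : n → ℝ) :
    ⟪toLpLin 2 2 B (WithLp.toLp 2 y), WithLp.toLp 2 y⟫_ℝ = y ⬝ᵥ B *ᵥ y := by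
  rw [toLpLin_apply, WithLp.ofLp_toLp, EuclideanSpace.inner_toLp_toLp, star_trivial]

theorem dotProduct_transpose_mul_mul_mulVec {m : Type*} [Fintype m] (A : Matrix m n ℝ)
    (M : Matrix m m ℝ) (y : n → ℝ) : y ⬝ᵥ (Aᵀ * M * A) *ᵥ y = A *ᵥ y ⬝ᵥ M *ᵥ A *ᵥ y := by
  rw [Matrix.mul_assoc, ← mulVec_mulVec, dotProduct_mulVec, vecMul_transpose, ← mulVec_mulVec]

namespace IsHermitian

variable [DecidableEq n] {B : Matrix n n ℝ} (hB : B.IsHermitian)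

theorem toLpLin_eigenvectorBasis (j : n) :
    toLpLin 2 2 B (hB.eigenvectorBasis j) = hB.eigenvalues j • hB.eigenvectorBasis j := by
  rw [toLpLin_apply, hB.mulVec_eigenvectorBasis, WithLp.toLp_smul, WithLp.toLp_ofLp]

theorem dotProduct_mulVec_le_of_eigenvalues_le {c : ℝ} (hc : ∀ j, hB.eigenvalues j ≤ c)
    (y : n → ℝ) : y ⬝ᵥ B *ᵥ y ≤ c * (y ⬝ᵥ y) := by
  rw [← inner_toLpLin_self, ← EuclideanSpace.norm_toLp_sq_eq_dotProduct]
  exact hB.eigenvectorBasis.inner_map_self_le_mul_norm_sq hB.toLpLin_eigenvectorBasis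
    fun j _ => hc j

theorem eigenvalues_le_add_of_dotProduct_mulVec_le {d : ℕ} {B C : Matrix (Fin d) (Fin d) ℝ}
    (hB : B.IsHermitian) (hC : C.IsHermitian) {eB eC : Equiv.Perm (Fin d)}
    (hBa : Antitone (hB.eigenvalues ∘ eB)) (hCa : Antitone (hC.eigenvalues ∘ eC)) {δ : ℝ}
    (hBC : ∀ y, y ⬝ᵥ B *ᵥ y ≤ y ⬝ᵥ C *ᵥ y + δ * (y ⬝ᵥ y)) (i : Fin d) :
    hB.eigenvalues (eB i) ≤ hC.eigenvalues (eC i) + δ := by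
  refine (hB.eigenvectorBasis.reindex eB.symm).eigenvalue_le_add_of_inner_map_self_le
    (hC.eigenvectorBasis.reindex eC.symm) (S := toLpLin 2 2 B) (T := toLpLin 2 2 C) hBa hCa
    (fun j => ?_) (fun j => ?_) (fun x => ?_) i
  · simpa using hB.toLpLin_eigenvectorBasis (eB j)
  · simpa using hC.toLpLin_eigenvectorBasis (eC j)
  · simpa only [← inner_toLpLin_self, ← EuclideanSpace.norm_toLp_sq_eq_dotProduct,
      WithLp.toLp_ofLp] using hBC x.ofLp

end IsHermitian

end Matrix

open Matrix

/-- Weyl-type eigenvalue perturbation bound for `AᵀSSᵀA` versus `AᵀA`,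
where `μ` and `ν` are the eigenvalues listed in decreasing order. -/
theorem stmt_1 {n m d : ℕ} (ε : ℝ) (hε : 0 < ε)
    (A : Matrix (Fin n) (Fin d) ℝ) (S : Matrix (Fin n) (Fin m) ℝ)
    (hS : ∀ x : Fin n → ℝ, |x ⬝ᵥ ((S * Sᵀ - 1).mulVec x)| ≤ ε * ∑ i, x i ^ 2)
    (hH : (Aᵀ * S * Sᵀ * A).IsHermitian) (hA : (Aᵀ * A).IsHermitian)
    (μ ν : Fin d → ℝ) (hμa : Antitone μ) (hνa : Antitone ν)
    (hμ : ∃ e : Equiv.Perm (Fin d), μ = hH.eigenvalues ∘ e)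
    (hν : ∃ e : Equiv.Perm (Fin d), ν = hA.eigenvalues ∘ e) :
    ∀ i, ν i - ε * (⨆ j, ν j) ≤ μ i ∧ μ i ≤ ν i + ε * (⨆ j, ν j) := by
  obtain ⟨eH, rfl⟩ := hμ
  obtain ⟨eA, rfl⟩ := hν
  set νmax := ⨆ j, (hA.eigenvalues ∘ eA) j
  have hmax : ∀ y, y ⬝ᵥ (Aᵀ * A) *ᵥ y ≤ νmax * (y ⬝ᵥ y) :=
    hA.dotProduct_mulVec_le_of_eigenvalues_le fun j => by
      simpa using le_ciSup (Set.finite_range (hA.eigenvalues ∘ eA)).bddAbove (eA.symm j)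
  have hclose : ∀ y, |y ⬝ᵥ (Aᵀ * S * Sᵀ * A) *ᵥ y - y ⬝ᵥ (Aᵀ * A) *ᵥ y| ≤
      ε * νmax * (y ⬝ᵥ y) := fun y => calc
    _ = |A *ᵥ y ⬝ᵥ (S * Sᵀ - 1) *ᵥ A *ᵥ y| := by
      rw [← dotProduct_transpose_mul_mul_mulVec, ← dotProduct_sub, ← sub_mulVec, Matrix.mul_sub,
        Matrix.sub_mul, Matrix.mul_one, ← Matrix.mul_assoc Aᵀ S]
    _ ≤ ε * (y ⬝ᵥ (Aᵀ * A) *ᵥ y) := by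
      rw [← Matrix.mul_one Aᵀ, dotProduct_transpose_mul_mul_mulVec, one_mulVec]
      simpa only [dotProduct, sq] using hS (A *ᵥ y)
    _ ≤ ε * νmax * (y ⬝ᵥ y) := by
      rw [mul_assoc]
      exact mul_le_mul_of_nonneg_left (hmax y) hε.le
  intro i
  simp only [Function.comp_apply]
  constructor
  · linarith [hA.eigenvalues_le_add_of_dotProduct_mulVec_le hH hνa hμa (δ := ε * νmax)
      (fun y => by linarith [(abs_le.1 (hclose y)).1]) i]
  · linarith [hH.eigenvalues_le_add_of_dotProduct_mulVec_le hA hμa hνa (δ := ε * νmax)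
      (fun y => by linarith [(abs_le.1 (hclose y)).2]) i]
end

section
/- Suppose f : ℝ^d → ℝ is twice differentiable, k-strongly convex and M-smooth, and Ĥ is a symmetric matrix satisfying (1-ε)k·I ⪯ Ĥ ⪯ (1+ε)M·I for some ε ∈ (0,1). Let p = -Ĥ^{-1}∇f(w) for some w ∈ ℝ^d. Then for every step size α with 0 < α ≤ 2(1-β)(1-ε)k/M and β ∈ (0, 1/2], the Armijo condition f(w + αp) ≤ f(w) + αβ·pᵀ∇f(w) holds. -/
/-!
The second derivative of `t ↦ f (x + t • v)` is `⟪v, H v⟫ ≤ M ‖v‖²`, so integrating twice gives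
the descent lemma `f (x + v) ≤ f x + ⟪∇f x, v⟫ + M/2 ‖v‖²`. For `v = α • p` the linear term is
`-α ⟪p, Ĥ p⟫`, and since `⟪p, Ĥ p⟫ ≥ (1 - ε) k ‖p‖²`, the step-size bound makes the quadratic term
at most a `(1 - β)` fraction of it.
-/

open scoped RealInnerProductSpace

open Set in
theorem le_add_mul_add_sq_of_hasDerivAt_le {φ φ' φ'' : ℝ → ℝ} {a b C : ℝ} (hab : a ≤ b)
    (hφ : ∀ t ∈ Icc a b, HasDerivAt φ (φ' t) t) (hφ' : ∀ t ∈ Icc a b, HasDerivAt φ' (φ'' t) t)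
    (hC : ∀ t ∈ Icc a b, φ'' t ≤ C) :
    φ b ≤ φ a + (b - a) * φ' a + C / 2 * (b - a) ^ 2 := by
  have hslope : ∀ t ∈ Icc a b, φ' t ≤ φ' a + C * (t - a) := by
    refine image_le_of_deriv_right_le_deriv_boundary (f' := φ'') (B' := fun _ ↦ C)
      (fun t ht ↦ (hφ' t ht).continuousAt.continuousWithinAt)
      (fun t ht ↦ (hφ' t (Ico_subset_Icc_self ht)).hasDerivWithinAt) (by simp) (by fun_prop)
      (fun t _ ↦ ?_) (fun t ht ↦ hC t (Ico_subset_Icc_self ht))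
    simpa using ((((hasDerivAt_id' t).sub_const a).const_mul C).const_add (φ' a)).hasDerivWithinAt
  refine image_le_of_deriv_right_le_deriv_boundary (f' := φ')
    (B := fun t ↦ φ a + (t - a) * φ' a + C / 2 * (t - a) ^ 2) (B' := fun t ↦ φ' a + C * (t - a))
    (fun t ht ↦ (hφ t ht).continuousAt.continuousWithinAt)
    (fun t ht ↦ (hφ t (Ico_subset_Icc_self ht)).hasDerivWithinAt) (by simp) (by fun_prop)
    (fun t _ ↦ ?_) (fun t ht ↦ hslope t (Ico_subset_Icc_self ht)) ⟨hab, le_rfl⟩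
  have hid := (hasDerivAt_id' t).sub_const a
  refine (((hid.mul_const (φ' a)).const_add (φ a)).fun_add
    ((hid.fun_pow 2).const_mul (C / 2))).hasDerivWithinAt.congr_deriv ?_
  ring

theorem le_add_inner_add_sq_of_inner_hessian_le {E : Type*} [NormedAddCommGroup E]
    [InnerProductSpace ℝ E] [CompleteSpace E] {f : E → ℝ} {g : E → E} {H : E → E →L[ℝ] E}
    {M : ℝ} (hg : ∀ x, HasGradientAt f (g x) x) (hH : ∀ x, HasFDerivAt g (H x) x)
    (hM : ∀ x v, ⟪v, H x v⟫ ≤ M * ‖v‖ ^ 2) (x v : E) :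
    f (x + v) ≤ f x + ⟪g x, v⟫ + M / 2 * ‖v‖ ^ 2 := by
  have hline (t : ℝ) : HasDerivAt (fun t : ℝ ↦ x + t • v) v t := by
    simpa using ((hasDerivAt_id' t).smul_const v).const_add x
  have hφ (t : ℝ) : HasDerivAt (fun t : ℝ ↦ f (x + t • v)) ⟪g (x + t • v), v⟫ t :=
    (hg _).hasFDerivAt.comp_hasDerivAt t (hline t)
  have hφ' (t : ℝ) :
      HasDerivAt (fun t : ℝ ↦ ⟪g (x + t • v), v⟫) ⟪H (x + t • v) v, v⟫ t := by
    simpa using ((hH _).comp_hasDerivAt t (hline t)).inner ℝ (hasDerivAt_const t v)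
  have := le_add_mul_add_sq_of_hasDerivAt_le zero_le_one (fun t _ ↦ hφ t) (fun t _ ↦ hφ' t)
    (C := M * ‖v‖ ^ 2) fun t _ ↦ real_inner_comm v _ ▸ hM _ v
  simpa [mul_div_right_comm] using this

theorem stmt_2_general {d : ℕ} (k M ε β : ℝ) (hk : 0 < k) (hkM : k ≤ M) (hβ1 : β ≤ 1 / 2)
    (f : EuclideanSpace ℝ (Fin d) → ℝ)
    (hgrad : ∀ w, HasGradientAt f (gradient f w) w)
    (Hf : EuclideanSpace ℝ (Fin d) →
      EuclideanSpace ℝ (Fin d) →L[ℝ] EuclideanSpace ℝ (Fin d))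
    (hHf : ∀ w, HasFDerivAt (gradient f) (Hf w) w)
    (hsmooth : ∀ w v, ⟪v, Hf w v⟫ ≤ M * ‖v‖ ^ 2)
    (Hhat : EuclideanSpace ℝ (Fin d) →L[ℝ] EuclideanSpace ℝ (Fin d))
    (hlow : ∀ v, (1 - ε) * k * ‖v‖ ^ 2 ≤ ⟪v, Hhat v⟫)
    (w p : EuclideanSpace ℝ (Fin d)) (hp : Hhat p = -gradient f w)
    (α : ℝ) (hα0 : 0 < α) (hα : α ≤ 2 * (1 - β) * (1 - ε) * k / M) :
    f (w + α • p) ≤ f w + α * β * ⟪p, gradient f w⟫ := by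
  have hM : 0 < M := hk.trans_le hkM
  have hαM : α * M ≤ 2 * (1 - β) * (1 - ε) * k := (le_div_iff₀ hM).mp hα
  have hgrad_p : ⟪gradient f w, p⟫ = -⟪p, Hhat p⟫ := by
    rw [← neg_neg (gradient f w), ← hp, inner_neg_left, real_inner_comm]
  calc f (w + α • p)
      ≤ f w + ⟪gradient f w, α • p⟫ + M / 2 * ‖α • p‖ ^ 2 :=
        le_add_inner_add_sq_of_inner_hessian_le hgrad hHf hsmooth w (α • p)
    _ = f w - α * ⟪p, Hhat p⟫ + α * (α * M / 2 * ‖p‖ ^ 2) := by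
        rw [inner_smul_right, norm_smul, Real.norm_of_nonneg hα0.le, hgrad_p]
        ring
    _ ≤ f w - α * ⟪p, Hhat p⟫ + α * ((1 - β) * ((1 - ε) * k * ‖p‖ ^ 2)) := by
        gcongr _ + _ * ?_
        nlinarith [mul_le_mul_of_nonneg_right hαM (sq_nonneg ‖p‖)]
    _ ≤ f w - α * ⟪p, Hhat p⟫ + α * ((1 - β) * ⟪p, Hhat p⟫) := by
        gcongr
        · linarith
        · exact hlow p
    _ = f w + α * β * ⟪p, gradient f w⟫ := by
        rw [real_inner_comm (gradient f w), hgrad_p]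
        ring

/-- Armijo condition holds for approximate Newton directions for any
step size `α ≤ 2(1-β)(1-ε)k/M`. -/
theorem stmt_2 {d : ℕ} (k M ε β : ℝ) (hk : 0 < k) (hkM : k ≤ M)
    (hε0 : 0 < ε) (hε1 : ε < 1) (hβ0 : 0 < β) (hβ1 : β ≤ 1 / 2)
    (f : EuclideanSpace ℝ (Fin d) → ℝ)
    (hgrad : ∀ w, HasGradientAt f (gradient f w) w)
    (Hf : EuclideanSpace ℝ (Fin d) →
      EuclideanSpace ℝ (Fin d) →L[ℝ] EuclideanSpace ℝ (Fin d))
    (hHf : ∀ w, HasFDerivAt (gradient f) (Hf w) w)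
    (hstrong : ∀ w v, k * ‖v‖ ^ 2 ≤ ⟪v, Hf w v⟫)
    (hsmooth : ∀ w v, ⟪v, Hf w v⟫ ≤ M * ‖v‖ ^ 2)
    (Hhat : EuclideanSpace ℝ (Fin d) →L[ℝ] EuclideanSpace ℝ (Fin d))
    (hsym : ∀ u v, ⟪Hhat u, v⟫ = ⟪u, Hhat v⟫)
    (hlow : ∀ v, (1 - ε) * k * ‖v‖ ^ 2 ≤ ⟪v, Hhat v⟫)
    (hup : ∀ v, ⟪v, Hhat v⟫ ≤ (1 + ε) * M * ‖v‖ ^ 2)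
    (w p : EuclideanSpace ℝ (Fin d)) (hp : Hhat p = -gradient f w)
    (α : ℝ) (hα0 : 0 < α) (hα : α ≤ 2 * (1 - β) * (1 - ε) * k / M) :
    f (w + α • p) ≤ f w + α * β * ⟪p, gradient f w⟫ :=
  stmt_2_general k M ε β hk hkM hβ1 f hgrad Hf hHf hsmooth Hhat hlow w p hp α hα0 hα
end

section
/- Suppose f : ℝ^d → ℝ is twice differentiable, k-strongly convex and M-smooth with minimizer w*, and Ĥ_t is a symmetric positive definite matrix satisfying λ_max(Ĥ_t) ≤ (1+ε)M. If w_{t+1} = w_t + α_t p_t with p_t = -Ĥ_t^{-1}∇f(w_t) and the Armijo condition f(w_{t+1}) ≤ f(w_t) + α_t β p_tᵀ∇f(w_t) holds, then f(w_{t+1}) - f(w*) ≤ (1 - ρ)(f(w_t) - f(w*)) where ρ = 2α_t β k / (M(1+ε)). -/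
open scoped RealInnerProductSpace

/-
Strong convexity gives, for every `w`, `f w ≥ f wₜ + ⟪∇f wₜ, w - wₜ⟫ + k/2 ‖w - wₜ‖²`, and minimising
the right-hand side over `w` yields the Polyak–Łojasiewicz inequality
`2k (f wₜ - f w*) ≤ ‖∇f wₜ‖²`. On the other hand `∇f wₜ = -Ĥ pₜ`, and since `Ĥ` is positive with
`Ĥ ≤ λ` for `λ = (1+ε)M` we have `Ĥ² ≤ λ Ĥ`, i.e. `‖∇f wₜ‖² ≤ λ ⟪pₜ, Ĥ pₜ⟫`. The Armijo condition
decreases `f` by `αₜ β ⟪pₜ, Ĥ pₜ⟫ ≥ αₜ β ‖∇f wₜ‖² / λ ≥ (2 αₜ β k / λ) (f wₜ - f w*)`.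
-/

theorem add_deriv_mul_add_sq_le_of_le_deriv2 {φ φ' φ'' : ℝ → ℝ} {m : ℝ}
    (hφ : ∀ s, HasDerivAt φ (φ' s) s) (hφ' : ∀ s, HasDerivAt φ' (φ'' s) s)
    (hm : ∀ s, m ≤ φ'' s) (x y : ℝ) :
    φ x + φ' x * (y - x) + m / 2 * (y - x) ^ 2 ≤ φ y := by
  -- `φ - m s² / 2` is convex, hence lies above its tangent lines.
  set ψ : ℝ → ℝ := fun s => φ s - m / 2 * s ^ 2
  have hψ (s : ℝ) : HasDerivAt ψ (φ' s - m * s) s :=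
    ((hφ s).sub ((hasDerivAt_pow 2 s).const_mul (m / 2))).congr_deriv (by ring)
  have hψ' (s : ℝ) : HasDerivAt (fun s => φ' s - m * s) (φ'' s - m) s :=
    ((hφ' s).sub ((hasDerivAt_id' s).const_mul m)).congr_deriv (by ring)
  have hconvex : ConvexOn ℝ Set.univ ψ :=
    convexOn_of_hasDerivWithinAt2_nonneg convex_univ
      (fun s _ => (hψ s).continuousAt.continuousWithinAt)
      (fun s _ => (hψ s).hasDerivWithinAt) (fun s _ => (hψ' s).hasDerivWithinAt)
      (fun s _ => sub_nonneg.2 (hm s))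
  rcases lt_trichotomy x y with hxy | rfl | hxy
  · have h := hconvex.le_slope_of_hasDerivAt trivial trivial hxy (hψ x)
    rw [slope_def_field, le_div_iff₀ (sub_pos.2 hxy)] at h
    simp only [ψ] at h
    nlinarith
  · simp
  · have h := hconvex.slope_le_of_hasDerivAt trivial trivial hxy (hψ x)
    rw [slope_def_field, div_le_iff₀ (sub_pos.2 hxy)] at h
    simp only [ψ] at h
    nlinarith

section Hessian

variable {E : Type*} [NormedAddCommGroup E] [InnerProductSpace ℝ E] [CompleteSpace E]
  {f : E → ℝ} {g : E → E} {H : E → E →L[ℝ] E} {k : ℝ}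

theorem add_inner_add_mul_sq_le_of_hessian_ge (hg : ∀ w, HasGradientAt f (g w) w)
    (hH : ∀ w, HasFDerivAt g (H w) w) (hk : ∀ w v, k * ‖v‖ ^ 2 ≤ ⟪v, H w v⟫) (u w : E) :
    f u + ⟪g u, w - u⟫ + k / 2 * ‖w - u‖ ^ 2 ≤ f w := by
  set v := w - u
  have hc (s : ℝ) : HasDerivAt (fun s : ℝ => u + s • v) v s := by
    simpa using ((hasDerivAt_id s).smul_const v).const_add u
  set c : ℝ → E := fun s => u + s • v
  have hφ (s : ℝ) : HasDerivAt (fun s => f (c s)) ⟪g (c s), v⟫ s :=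
    (hg (c s)).hasFDerivAt.comp_hasDerivAt s (hc s)
  have hφ' (s : ℝ) : HasDerivAt (fun s => ⟪g (c s), v⟫) ⟪H (c s) v, v⟫ s := by
    simpa using ((hH (c s)).comp_hasDerivAt s (hc s)).inner ℝ (hasDerivAt_const s v)
  have h := add_deriv_mul_add_sq_le_of_le_deriv2 hφ hφ'
    (fun s => (hk (c s) v).trans_eq (real_inner_comm _ _)) 0 1
  simp only [c, v, zero_smul, add_zero, one_smul, add_sub_cancel, sub_zero] at h
  linarith

theorem two_mul_sub_le_norm_sq_of_hessian_ge (hk₀ : 0 < k) (hg : ∀ w, HasGradientAt f (g w) w)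
    (hH : ∀ w, HasFDerivAt g (H w) w) (hk : ∀ w v, k * ‖v‖ ^ 2 ≤ ⟪v, H w v⟫) (u w : E) :
    2 * k * (f u - f w) ≤ ‖g u‖ ^ 2 := by
  have hlower := add_inner_add_mul_sq_le_of_hessian_ge hg hH hk u w
  have hsq : 0 ≤ ‖g u + k • (w - u)‖ ^ 2 := sq_nonneg _
  rw [norm_add_sq_real, real_inner_smul_right, norm_smul, Real.norm_of_nonneg hk₀.le] at hsq
  nlinarith

end Hessian

theorem norm_apply_sq_le_mul_inner_apply_self {E : Type*} [NormedAddCommGroup E]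
    [InnerProductSpace ℝ E] {T : E →L[ℝ] E} (hT : T.IsPositive) {c : ℝ}
    (hc : ∀ v, ⟪v, T v⟫ ≤ c * ‖v‖ ^ 2) (p : E) :
    ‖T p‖ ^ 2 ≤ c * ⟪p, T p⟫ := by
  -- Cauchy–Schwarz for `⟪x, T y⟫` at `p, T p`: `‖T p‖⁴ ≤ ⟪p, T p⟫ ⟪T p, T (T p)⟫ ≤ ⟪p, T p⟫ c ‖T p‖²`.
  set B : LinearMap.BilinForm ℝ E := (innerₗ E).compl₂ (T : E →ₗ[ℝ] E)
  have hcs := B.apply_mul_apply_le_of_forall_zero_le hT.inner_nonneg_right p (T p)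
  have hsym : ⟪p, T (T p)⟫ = ‖T p‖ ^ 2 := by
    rw [← hT.inner_left_eq_inner_right, real_inner_self_eq_norm_sq]
  simp only [B, LinearMap.compl₂_apply, innerₗ_apply_apply, ContinuousLinearMap.coe_coe, hsym,
    real_inner_self_eq_norm_sq] at hcs
  obtain hp | hp := eq_or_ne (T p) 0
  · simp [hp]
  · have hpos : 0 < ‖T p‖ ^ 2 := by positivity
    nlinarith [hc (T p), hT.inner_nonneg_right p]

theorem stmt_3_general {d : ℕ} (k M ε β αt : ℝ) (hk : 0 < k) (hkM : k ≤ M)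
    (hε : 0 ≤ ε) (hβ0 : 0 < β) (hαt : 0 < αt)
    (f : EuclideanSpace ℝ (Fin d) → ℝ)
    (hgrad : ∀ w, HasGradientAt f (gradient f w) w)
    (Hf : EuclideanSpace ℝ (Fin d) →
      EuclideanSpace ℝ (Fin d) →L[ℝ] EuclideanSpace ℝ (Fin d))
    (hHf : ∀ w, HasFDerivAt (gradient f) (Hf w) w)
    (hstrong : ∀ w v, k * ‖v‖ ^ 2 ≤ ⟪v, Hf w v⟫)
    (wstar : EuclideanSpace ℝ (Fin d))
    (Hhat : EuclideanSpace ℝ (Fin d) →L[ℝ] EuclideanSpace ℝ (Fin d))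
    (hsym : ∀ u v, ⟪Hhat u, v⟫ = ⟪u, Hhat v⟫)
    (hpd : ∀ v, v ≠ 0 → 0 < ⟪v, Hhat v⟫)
    (hup : ∀ v, ⟪v, Hhat v⟫ ≤ (1 + ε) * M * ‖v‖ ^ 2)
    (wt wt1 pt : EuclideanSpace ℝ (Fin d))
    (hpt : Hhat pt = -gradient f wt)
    (harmijo : f wt1 ≤ f wt + αt * β * ⟪pt, gradient f wt⟫) :
    f wt1 - f wstar ≤ (1 - 2 * αt * β * k / (M * (1 + ε))) * (f wt - f wstar) := by
  have hlam : 0 < M * (1 + ε) := by have := hk.trans_le hkM; positivity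
  have hpos : Hhat.IsPositive := (Hhat.isPositive_iff).2 ⟨hsym, fun v => by
    rw [real_inner_comm]
    obtain rfl | hv := eq_or_ne v 0
    · simp
    · exact (hpd v hv).le⟩
  have hgrad_eq : gradient f wt = -Hhat pt := by rw [hpt, neg_neg]
  have hdescent : ‖gradient f wt‖ ^ 2 ≤ (1 + ε) * M * ⟪pt, Hhat pt⟫ := by
    simpa [hgrad_eq] using norm_apply_sq_le_mul_inner_apply_self hpos hup pt
  have hpl := two_mul_sub_le_norm_sq_of_hessian_ge hk hgrad hHf hstrong wt wstar
  have hgap : 2 * k * (f wt - f wstar) / (M * (1 + ε)) ≤ ⟪pt, Hhat pt⟫ := by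
    rw [div_le_iff₀ hlam]; linarith
  calc f wt1 - f wstar ≤ f wt - f wstar - αt * β * ⟪pt, Hhat pt⟫ := by
        rw [hgrad_eq, inner_neg_right] at harmijo; linarith
    _ ≤ f wt - f wstar - αt * β * (2 * k * (f wt - f wstar) / (M * (1 + ε))) := by
        gcongr
    _ = (1 - 2 * αt * β * k / (M * (1 + ε))) * (f wt - f wstar) := by ring

/-- one-step linear decrease of the objective gap for approximate
Newton with Armijo line search. -/
theorem stmt_3 {d : ℕ} (k M ε β αt : ℝ) (hk : 0 < k) (hkM : k ≤ M)
    (hε : 0 ≤ ε) (hβ0 : 0 < β) (hβ1 : β ≤ 1 / 2) (hαt : 0 < αt)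
    (f : EuclideanSpace ℝ (Fin d) → ℝ)
    (hgrad : ∀ w, HasGradientAt f (gradient f w) w)
    (Hf : EuclideanSpace ℝ (Fin d) →
      EuclideanSpace ℝ (Fin d) →L[ℝ] EuclideanSpace ℝ (Fin d))
    (hHf : ∀ w, HasFDerivAt (gradient f) (Hf w) w)
    (hstrong : ∀ w v, k * ‖v‖ ^ 2 ≤ ⟪v, Hf w v⟫)
    (hsmooth : ∀ w v, ⟪v, Hf w v⟫ ≤ M * ‖v‖ ^ 2)
    (wstar : EuclideanSpace ℝ (Fin d)) (hmin : ∀ w, f wstar ≤ f w)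
    (Hhat : EuclideanSpace ℝ (Fin d) →L[ℝ] EuclideanSpace ℝ (Fin d))
    (hsym : ∀ u v, ⟪Hhat u, v⟫ = ⟪u, Hhat v⟫)
    (hpd : ∀ v, v ≠ 0 → 0 < ⟪v, Hhat v⟫)
    (hup : ∀ v, ⟪v, Hhat v⟫ ≤ (1 + ε) * M * ‖v‖ ^ 2)
    (wt wt1 pt : EuclideanSpace ℝ (Fin d))
    (hpt : Hhat pt = -gradient f wt)
    (hupdate : wt1 = wt + αt • pt)
    (harmijo : f wt1 ≤ f wt + αt * β * ⟪pt, gradient f wt⟫) :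
    f wt1 - f wstar ≤ (1 - 2 * αt * β * k / (M * (1 + ε))) * (f wt - f wstar) :=
  stmt_3_general k M ε β αt hk hkM hε hβ0 hαt f hgrad Hf hHf hstrong wstar Hhat hsym hpd hup wt wt1
    pt hpt harmijo
end

section
/- Let H and Ĥ be symmetric matrices with ‖Ĥ - H‖₂ ≤ ε M and with the minimum nonzero eigenvalue of Ĥ at least η - εM > 0. Then for any vector g, ⟨Hg, Ĥ†g⟩ ≥ ‖Ûᵀg‖² - (εM/(η - εM))‖g‖², where Û is an orthonormal basis of the range of Ĥ. -/
/-!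
`Ĥ P` is a symmetric projection with the same range as `Ĥ`, hence equals `Û Ûᵀ`; this turns
`⟨Ĥg, Pg⟩` into `‖Ûᵀg‖²`. The remaining term `⟨(Ĥ - H)g, Pg⟩` is bounded by Cauchy–Schwarz
and `‖Pg‖ ≤ ‖g‖ / (η - εM)`: `Pg` lies in the range of `Ĥ`, on which `Ĥ` stretches norms by at
least its least nonzero eigenvalue, and `Ĥ Pg = Û Ûᵀ g` has norm at most `‖g‖`.
-/

open Matrix

open scoped RealInnerProductSpace in
theorem LinearMap.IsSymmetric.mul_norm_le_norm_apply_of_mem_range {E : Type*}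
    [NormedAddCommGroup E] [InnerProductSpace ℝ E] [FiniteDimensional ℝ E] {T : E →ₗ[ℝ] E}
    (hT : T.IsSymmetric) {lam : ℝ} (hlam : 0 ≤ lam)
    (heig : ∀ (μ : ℝ) (v : E), v ≠ 0 → T v = μ • v → μ ≠ 0 → lam ≤ |μ|)
    {x : E} (hx : x ∈ LinearMap.range T) : lam * ‖x‖ ≤ ‖T x‖ := by
  obtain ⟨y, rfl⟩ := hx
  set b := hT.eigenvectorBasis rfl
  set ev := hT.eigenvalues rfl
  have hb : ∀ i, T (b i) = ev i • b i := fun i => by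
    simpa only [RCLike.ofReal_real_eq_id, id_eq] using hT.apply_eigenvectorBasis rfl i
  have hcoord : ∀ i v, ⟪b i, T v⟫ = ev i * ⟪b i, v⟫ := fun i v => by
    rw [← hT, hb, real_inner_smul_left]
  have hsq : (lam * ‖T y‖) ^ 2 ≤ ‖T (T y)‖ ^ 2 := by
    rw [mul_pow, ← b.sum_sq_inner_right, ← b.sum_sq_inner_right, Finset.mul_sum]
    refine Finset.sum_le_sum fun i _ => ?_
    rw [hcoord i (T y), mul_pow]
    by_cases hi : ev i = 0
    · simp [hcoord i y, hi]
    · have : lam ≤ |ev i| := heig _ _ (b.orthonormal.ne_zero i) (hb i) hi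
      exact mul_le_mul_of_nonneg_right (by simpa using pow_le_pow_left₀ hlam this 2) (sq_nonneg _)
  exact (pow_le_pow_iff_left₀ (by positivity) (norm_nonneg _) two_ne_zero).1 hsq

theorem Matrix.IsHermitian.mul_sqrt_sum_sq_le_of_mem_range {n : Type*} [Fintype n]
    [DecidableEq n] {A : Matrix n n ℝ} (hA : A.IsHermitian) {lam : ℝ} (hlam : 0 ≤ lam)
    (heig : ∀ (μ : ℝ) (v : n → ℝ), v ≠ 0 → A *ᵥ v = μ • v → μ ≠ 0 → lam ≤ |μ|)
    {x : n → ℝ} (hx : ∃ y, A *ᵥ y = x) :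
    lam * √(∑ j, x j ^ 2) ≤ √(∑ j, (A *ᵥ x) j ^ 2) := by
  have hT := isSymmetric_toEuclideanLin_iff.mpr hA
  have key := hT.mul_norm_le_norm_apply_of_mem_range hlam
    (fun μ v hv hAv hμ => heig μ v.ofLp (by simpa using hv) (congrArg WithLp.ofLp hAv) hμ)
    (x := WithLp.toLp 2 x) (by obtain ⟨y, rfl⟩ := hx; exact ⟨WithLp.toLp 2 y, rfl⟩)
  simpa [EuclideanSpace.norm_eq] using key

section

variable {R n m : Type*} [Fintype n] [Fintype m]

theorem Matrix.mul_eq_mul_transpose_of_range_eq [CommSemiring R] [DecidableEq m]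
    {A P : Matrix n n R} {U : Matrix n m R}
    (h1 : A * P * A = A) (h3 : (A * P)ᵀ = A * P) (hU : Uᵀ * U = 1)
    (hrange : ∀ x : n → R, (∃ y, A *ᵥ y = x) ↔ ∃ c, U *ᵥ c = x) :
    A * P = U * Uᵀ := by
  have hQU : A * P * U = U := by
    refine ext_iff_mulVec.2 fun c => ?_
    obtain ⟨y, hy⟩ := (hrange (U *ᵥ c)).2 ⟨c, rfl⟩
    rw [← mulVec_mulVec, ← hy, mulVec_mulVec, h1]
  have hUQ : U * Uᵀ * (A * P) = A * P := by
    refine ext_iff_mulVec.2 fun x => ?_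
    obtain ⟨c, hc⟩ := (hrange ((A * P) *ᵥ x)).1 ⟨P *ᵥ x, mulVec_mulVec _ _ _⟩
    rw [← mulVec_mulVec, ← hc, mulVec_mulVec, Matrix.mul_assoc, hU, Matrix.mul_one]
  calc A * P = (U * Uᵀ * (A * P))ᵀ := by rw [hUQ, h3]
    _ = A * P * U * Uᵀ := by
      rw [transpose_mul, h3, transpose_mul, transpose_transpose]; simp only [Matrix.mul_assoc]
    _ = U * Uᵀ := by rw [hQU]

theorem Matrix.eq_mul_transpose_mul_of_pinv [CommSemiring R] {A P : Matrix n n R}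
    (hA : Aᵀ = A) (h2 : P * A * P = P) (h4 : (P * A)ᵀ = P * A) :
    P = A * (Pᵀ * P) := by
  calc P = (P * A)ᵀ * P := by rw [h4, h2]
    _ = A * (Pᵀ * P) := by rw [transpose_mul, hA, mul_assoc]

theorem Matrix.sum_sq_eq_dotProduct_self (x : n → ℝ) : ∑ j, x j ^ 2 = x ⬝ᵥ x := by
  simp only [dotProduct, sq]

theorem Matrix.dotProduct_le_sqrt_sum_sq_mul_sqrt_sum_sq (x y : n → ℝ) :
    x ⬝ᵥ y ≤ √(∑ j, x j ^ 2) * √(∑ j, y j ^ 2) :=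
  Real.sum_mul_le_sqrt_mul_sqrt _ _ _

theorem Matrix.mulVec_dotProduct [CommSemiring R] (M : Matrix m n R) (x : n → R) (y : m → R) :
    (M *ᵥ x) ⬝ᵥ y = x ⬝ᵥ (Mᵀ *ᵥ y) := by
  rw [← vecMul_transpose, ← dotProduct_mulVec]

variable [DecidableEq m] {U : Matrix n m ℝ}

theorem Matrix.sum_sq_mulVec_of_transpose_mul_eq_one (hU : Uᵀ * U = 1) (c : m → ℝ) :
    ∑ j, (U *ᵥ c) j ^ 2 = ∑ j, c j ^ 2 := by
  rw [sum_sq_eq_dotProduct_self, sum_sq_eq_dotProduct_self, mulVec_dotProduct, mulVec_mulVec,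
    hU, one_mulVec]

theorem Matrix.sum_sq_transpose_mulVec_le (hU : Uᵀ * U = 1) (g : n → ℝ) :
    ∑ j, (Uᵀ *ᵥ g) j ^ 2 ≤ ∑ j, g j ^ 2 := by
  set w := U *ᵥ (Uᵀ *ᵥ g)
  have hgw : g ⬝ᵥ w = ∑ j, (Uᵀ *ᵥ g) j ^ 2 := by
    rw [dotProduct_comm, mulVec_dotProduct, sum_sq_eq_dotProduct_self]
  have hww : w ⬝ᵥ w = ∑ j, (Uᵀ *ᵥ g) j ^ 2 := by
    rw [← sum_sq_eq_dotProduct_self, sum_sq_mulVec_of_transpose_mul_eq_one hU]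
  have hnonneg : 0 ≤ (g - w) ⬝ᵥ (g - w) := by rw [← sum_sq_eq_dotProduct_self]; positivity
  rw [sub_dotProduct, dotProduct_sub, dotProduct_sub, dotProduct_comm w g, hgw, hww,
    ← sum_sq_eq_dotProduct_self] at hnonneg
  linarith

end

theorem stmt_9_general {d r : ℕ} (ε M η : ℝ)
    (hpos : 0 < η - ε * M)
    (H Hh P : Matrix (Fin d) (Fin d) ℝ)
    (hHh : Hh.PosSemidef)
    (hclose : ∀ x : Fin d → ℝ,
      Real.sqrt (∑ j, ((Hh - H).mulVec x) j ^ 2) ≤ ε * M * Real.sqrt (∑ j, x j ^ 2))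
    (heig : ∀ (μ : ℝ) (v : Fin d → ℝ), v ≠ 0 → Hh.mulVec v = μ • v → μ ≠ 0 →
      η - ε * M ≤ μ)
    (h1 : Hh * P * Hh = Hh) (h2 : P * Hh * P = P)
    (h3 : (Hh * P)ᵀ = Hh * P) (h4 : (P * Hh)ᵀ = P * Hh)
    (Uh : Matrix (Fin d) (Fin r) ℝ) (hUh : Uhᵀ * Uh = 1)
    (hrange : ∀ x : Fin d → ℝ, (∃ y, Hh.mulVec y = x) ↔ ∃ c, Uh.mulVec c = x) :
    ∀ g : Fin d → ℝ,
      ∑ j, (Uhᵀ.mulVec g) j ^ 2 - (ε * M / (η - ε * M)) * ∑ j, g j ^ 2 ≤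
        (H.mulVec g) ⬝ᵥ (P.mulVec g) := by
  intro g
  have hsymm : Hhᵀ = Hh := by rw [← conjTranspose_eq_transpose_of_trivial]; exact hHh.1
  have hproj := mul_eq_mul_transpose_of_range_eq h1 h3 hUh hrange
  have hmain : (Hh *ᵥ g) ⬝ᵥ (P *ᵥ g) = ∑ j, (Uhᵀ *ᵥ g) j ^ 2 := by
    rw [mulVec_dotProduct, hsymm, mulVec_mulVec, hproj, ← mulVec_mulVec, dotProduct_comm,
      mulVec_dotProduct, sum_sq_eq_dotProduct_self]
  have hPg : (η - ε * M) * √(∑ j, (P *ᵥ g) j ^ 2) ≤ √(∑ j, g j ^ 2) :=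
    calc (η - ε * M) * √(∑ j, (P *ᵥ g) j ^ 2) ≤ √(∑ j, (Hh *ᵥ (P *ᵥ g)) j ^ 2) :=
          hHh.1.mul_sqrt_sum_sq_le_of_mem_range hpos.le
            (fun μ v hv hHv hμ => (heig μ v hv hHv hμ).trans (le_abs_self μ))
            ⟨(Pᵀ * P) *ᵥ g, by rw [mulVec_mulVec, ← eq_mul_transpose_mul_of_pinv hsymm h2 h4]⟩
      _ = √(∑ j, (Uhᵀ *ᵥ g) j ^ 2) := by
          rw [mulVec_mulVec, hproj, ← mulVec_mulVec, sum_sq_mulVec_of_transpose_mul_eq_one hUh]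
      _ ≤ √(∑ j, g j ^ 2) := Real.sqrt_le_sqrt (sum_sq_transpose_mulVec_le hUh g)
  have herr : ((Hh - H) *ᵥ g) ⬝ᵥ (P *ᵥ g) ≤ ε * M / (η - ε * M) * ∑ j, g j ^ 2 :=
    calc ((Hh - H) *ᵥ g) ⬝ᵥ (P *ᵥ g)
        ≤ √(∑ j, ((Hh - H) *ᵥ g) j ^ 2) * √(∑ j, (P *ᵥ g) j ^ 2) :=
          dotProduct_le_sqrt_sum_sq_mul_sqrt_sum_sq _ _
      _ ≤ (ε * M * √(∑ j, g j ^ 2)) * (√(∑ j, g j ^ 2) / (η - ε * M)) :=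
          mul_le_mul (hclose g) ((le_div_iff₀ hpos).2 (by linarith)) (Real.sqrt_nonneg _)
            ((Real.sqrt_nonneg _).trans (hclose g))
      _ = ε * M / (η - ε * M) * (√(∑ j, g j ^ 2) * √(∑ j, g j ^ 2)) := by ring
      _ = ε * M / (η - ε * M) * ∑ j, g j ^ 2 := by rw [Real.mul_self_sqrt (by positivity)]
  have hsplit : (H *ᵥ g) ⬝ᵥ (P *ᵥ g) =
      (Hh *ᵥ g) ⬝ᵥ (P *ᵥ g) - ((Hh - H) *ᵥ g) ⬝ᵥ (P *ᵥ g) := by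
    rw [sub_mulVec, sub_dotProduct, sub_sub_cancel]
  rw [hsplit, hmain]
  linarith

/-- `⟨Hg, Ĥ†g⟩ ≥ ‖Ûᵀg‖² - (εM/(η-εM))‖g‖²` when `‖Ĥ-H‖₂ ≤ εM` and the
nonzero eigenvalues of PSD `Ĥ` are ≥ η - εM > 0, with `Û` an orthonormal basis of
range(Ĥ) and `Ĥ†` the Moore–Penrose pseudoinverse. -/
theorem stmt_9 {d r : ℕ} (ε M η : ℝ) (hε : 0 < ε) (hM : 0 < M)
    (hpos : 0 < η - ε * M)
    (H Hh P : Matrix (Fin d) (Fin d) ℝ)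
    (hHsym : H.IsHermitian) (hHh : Hh.PosSemidef)
    (hclose : ∀ x : Fin d → ℝ,
      Real.sqrt (∑ j, ((Hh - H).mulVec x) j ^ 2) ≤ ε * M * Real.sqrt (∑ j, x j ^ 2))
    (heig : ∀ (μ : ℝ) (v : Fin d → ℝ), v ≠ 0 → Hh.mulVec v = μ • v → μ ≠ 0 →
      η - ε * M ≤ μ)
    (h1 : Hh * P * Hh = Hh) (h2 : P * Hh * P = P)
    (h3 : (Hh * P)ᵀ = Hh * P) (h4 : (P * Hh)ᵀ = P * Hh)
    (Uh : Matrix (Fin d) (Fin r) ℝ) (hUh : Uhᵀ * Uh = 1)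
    (hrange : ∀ x : Fin d → ℝ, (∃ y, Hh.mulVec y = x) ↔ ∃ c, Uh.mulVec c = x) :
    ∀ g : Fin d → ℝ,
      ∑ j, (Uhᵀ.mulVec g) j ^ 2 - (ε * M / (η - ε * M)) * ∑ j, g j ^ 2 ≤
        (H.mulVec g) ⬝ᵥ (P.mulVec g) :=
  stmt_9_general ε M η hpos H Hh P hHh hclose heig h1 h2 h3 h4 Uh hUh hrange
end

section
/- Consider the recursion ‖Δ_{t+1}‖ ≤ (4εβ/(γ - L‖Δ_t‖))‖Δ_t‖ + (5L/(2(γ - L‖Δ_t‖)))‖Δ_t‖², with constants L, γ, β > 0 and 0 < ε ≤ γ/(8β). If ‖Δ_0‖ ≤ γ/(8L), then for all t ≥ 0, ‖Δ_t‖ ≤ γ/(5L). -/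
/-- induction for the local-convergence recursion: if
`‖Δ₀‖ ≤ γ/(8L)` then `‖Δ_t‖ ≤ γ/(5L)` for all `t`. -/
theorem stmt_12 {d : ℕ} (L γ β ε : ℝ) (hL : 0 < L) (hγ : 0 < γ) (hβ : 0 < β)
    (hε0 : 0 < ε) (hε : ε ≤ γ / (8 * β))
    (Δ : ℕ → EuclideanSpace ℝ (Fin d))
    (hrec : ∀ t, 0 < γ - L * ‖Δ t‖ →
      ‖Δ (t + 1)‖ ≤ (4 * ε * β / (γ - L * ‖Δ t‖)) * ‖Δ t‖ +
        (5 * L / (2 * (γ - L * ‖Δ t‖))) * ‖Δ t‖ ^ 2)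
    (h0 : ‖Δ 0‖ ≤ γ / (8 * L)) :
    ∀ t, ‖Δ t‖ ≤ γ / (5 * L) := by
  have hεβ : 4 * ε * β ≤ γ / 2 := by
    have h8 : ε * (8 * β) ≤ γ := (le_div_iff₀ (by positivity : (0:ℝ) < 8 * β)).mp hε
    nlinarith
  have key : ∀ t, ‖Δ t‖ ≤ γ / (8 * L) := by
    intro t
    induction t with
    | zero => exact h0
    | succ t ih =>
      have hx : 0 ≤ ‖Δ t‖ := norm_nonneg _
      have hLx : L * ‖Δ t‖ ≤ γ / 8 := by
        have := (le_div_iff₀ (by positivity : (0:ℝ) < 8 * L)).mp ih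
        nlinarith
      have hD : 7 * γ / 8 ≤ γ - L * ‖Δ t‖ := by linarith
      have hDpos : 0 < γ - L * ‖Δ t‖ := by linarith
      have hbd := hrec t hDpos
      set x := ‖Δ t‖ with hxdef
      have h1 : 4 * ε * β / (γ - L * x) * x ≤ γ / (14 * L) := by
        rw [div_mul_eq_mul_div, div_le_div_iff₀ hDpos (by positivity)]
        nlinarith [mul_le_mul hεβ hLx (by positivity) (by linarith)]
      have h2 : 5 * L / (2 * (γ - L * x)) * x ^ 2 ≤ 5 * γ / (112 * L) := by
        rw [div_mul_eq_mul_div, div_le_div_iff₀ (by positivity) (by positivity)]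
        nlinarith [mul_self_le_mul_self (by positivity : (0:ℝ) ≤ L * x) hLx]
      have h3 : γ / (14 * L) + 5 * γ / (112 * L) ≤ γ / (8 * L) := by
        rw [div_add_div _ _ (by positivity : (14 * L : ℝ) ≠ 0) (by positivity : (112 * L : ℝ) ≠ 0),
          div_le_div_iff₀ (by positivity) (by positivity)]
        nlinarith [mul_pos hγ (mul_pos hL hL)]
      linarith
  intro t
  have := key t
  have : γ / (8 * L) ≤ γ / (5 * L) := by
    apply div_le_div_of_nonneg_left hγ.le (by positivity)
    linarith
  linarith [key t]
end
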